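/- The Landau-Ginzburg system for Bl_3(P²) has exactly 6 = χ(Bl_3(P²)) solutions in (C*)², all of which are simple (the solution scheme is reduced): the Jacobian of the system is nonzero at each of the six solutions (1,1), (ρ,ρ), (ρ²,ρ²), (1,−1), (−1,1), (−1,−1), ρ = e^{2πi/3}. -/

import Mathlib

open Complex

/-!
Subtracting the two equations (cleared of denominators) leaves `(z₁ - z₂)(z₁z₂ + 1) = 0`. On the
diagonal the system becomes `(z + 1)(z³ - 1) = 0`, giving `-1` and the three cube roots of unity; on
the hyperbola `z₁z₂ = -1` it becomes `z₁² = 1`. The Jacobian is `3(1 + z)²` at a diagonal cube root of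
unity `z`, `-4` at `(-1, -1)` and `4` on the hyperbola, so it vanishes at no solution when `2, 3 ≠ 0`.
-/

theorem IsPrimitiveRoot.pow_three_eq_one_iff {R : Type*} [CommRing R] [IsDomain R] {ρ : R}
    (hρ : IsPrimitiveRoot ρ 3) {a : R} : a ^ 3 = 1 ↔ a = 1 ∨ a = ρ ∨ a = ρ ^ 2 := by
  constructor
  · intro ha
    obtain ⟨i, hi, rfl⟩ := hρ.eq_pow_of_pow_eq_one ha
    interval_cases i <;> simp
  · rintro (rfl | rfl | rfl)
    · exact one_pow 3
    · exact hρ.pow_eq_one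
    · rw [← pow_mul, mul_comm, pow_mul, hρ.pow_eq_one, one_pow]

section LandauGinzburg

variable {K : Type*} [Field K]

/-- `Fᵢ = zᵢ ∂W/∂zᵢ` for the potential `W = z₁ + z₂ + z₁z₂ + 1/z₁ + 1/(z₁z₂) + 1/z₂`. -/
def IsLGSolution (p : K × K) : Prop :=
  p.1 ≠ 0 ∧ p.2 ≠ 0 ∧ p.1 + p.1 * p.2 - 1 / p.1 - 1 / (p.1 * p.2) = 0 ∧
    p.2 + p.1 * p.2 - 1 / (p.1 * p.2) - 1 / p.2 = 0

/-- The determinant of `(∂Fᵢ/∂zⱼ)`. -/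
def lgJacobian (p : K × K) : K :=
  (1 + p.2 + 1 / p.1 ^ 2 + 1 / (p.1 ^ 2 * p.2)) *
      (1 + p.1 + 1 / (p.1 * p.2 ^ 2) + 1 / p.2 ^ 2) -
    (p.1 + 1 / (p.1 * p.2 ^ 2)) * (p.2 + 1 / (p.1 ^ 2 * p.2))

theorem isLGSolution_iff {a b : K} :
    IsLGSolution (a, b) ↔ (a = b ∧ (a + 1) * (a ^ 3 - 1) = 0) ∨ (b = -a ∧ a ^ 2 = 1) := by
  constructor
  · rintro ⟨ha, hb, h₁, h₂⟩
    field_simp at h₁ h₂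
    have hfactor : (a - b) * (a * b + 1) = 0 := by linear_combination h₁ - h₂
    rcases mul_eq_zero.mp hfactor with hdiag | hanti
    · obtain rfl : a = b := by linear_combination hdiag
      exact .inl ⟨rfl, by linear_combination h₁⟩
    · have hsq : a ^ 2 = 1 := by
        refine mul_left_cancel₀ hb ?_
        linear_combination h₁ - (a * b - 1) * hanti
      refine .inr ⟨mul_left_cancel₀ ha ?_, hsq⟩
      linear_combination hanti + hsq
  · rintro (⟨rfl, h⟩ | ⟨rfl, h⟩)
    · have ha : a ≠ 0 := by rintro rfl; norm_num at h
      refine ⟨ha, ha, ?_, ?_⟩ <;> field_simp <;> linear_combination h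
    · have ha : a ≠ 0 := by rintro rfl; norm_num at h
      refine ⟨ha, neg_ne_zero.mpr ha, ?_, ?_⟩ <;> field_simp
      · linear_combination -(a ^ 2 - a + 1) * h
      · linear_combination -(a ^ 2 + a + 1) * h

theorem lgJacobian_diag_of_pow_three_eq_one {a : K} (ha : a ^ 3 = 1) :
    lgJacobian (a, a) = 3 * (1 + a) ^ 2 := by
  have ha₀ : a ≠ 0 := by rintro rfl; norm_num at ha
  simp only [lgJacobian]
  field_simp
  linear_combination (-3 * a ^ 5 - 4 * a ^ 4 - 2 * a ^ 3 - a ^ 2 - 2 * a) * ha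

theorem lgJacobian_antidiag_of_sq_eq_one {a : K} (ha : a ^ 2 = 1) :
    lgJacobian (a, -a) = 4 := by
  have ha₀ : a ≠ 0 := by rintro rfl; norm_num at ha
  simp only [lgJacobian]
  field_simp
  linear_combination -(3 * a ^ 4 + a ^ 2) * ha

theorem lgJacobian_ne_zero_of_isLGSolution (h2 : (2 : K) ≠ 0) (h3 : (3 : K) ≠ 0) {p : K × K}
    (hp : IsLGSolution p) : lgJacobian p ≠ 0 := by
  obtain ⟨a, b⟩ := p
  rcases isLGSolution_iff.mp hp with ⟨rfl, h⟩ | ⟨rfl, h⟩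
  · rcases mul_eq_zero.mp h with h | h
    · obtain rfl : a = -1 := by linear_combination h
      have hval : lgJacobian ((-1 : K), -1) = -(2 * 2) := by norm_num [lgJacobian]
      rw [hval]
      exact neg_ne_zero.mpr (mul_ne_zero h2 h2)
    · have hcube : a ^ 3 = 1 := by linear_combination h
      have ha : 1 + a ≠ 0 := fun ha => h2 (by linear_combination (a ^ 2 - a + 1) * ha - hcube)
      rw [lgJacobian_diag_of_pow_three_eq_one hcube]
      exact mul_ne_zero h3 (pow_ne_zero 2 ha)
  · rw [lgJacobian_antidiag_of_sq_eq_one h, show (4 : K) = 2 * 2 by norm_num]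
    exact mul_ne_zero h2 h2

theorem setOf_isLGSolution_eq {ρ : K} (hρ : IsPrimitiveRoot ρ 3) :
    {p : K × K | IsLGSolution p} =
      {(1, 1), (ρ, ρ), (ρ ^ 2, ρ ^ 2), (1, -1), (-1, 1), (-1, -1)} := by
  ext ⟨a, b⟩
  simp only [Set.mem_ofPred_eq, isLGSolution_iff, mul_eq_zero, sub_eq_zero,
    hρ.pow_three_eq_one_iff, add_eq_zero_iff_eq_neg, sq_eq_one_iff, Set.mem_insert_iff,
    Set.mem_singleton_iff, Prod.mk.injEq]
  grind

theorem ncard_setOf_isLGSolution {ρ : K} (hρ : IsPrimitiveRoot ρ 3) (h2 : (2 : K) ≠ 0) :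
    {p : K × K | IsLGSolution p}.ncard = 6 := by
  have h1 : ρ ≠ 1 := hρ.ne_one (by norm_num)
  have h1' : ρ ^ 2 ≠ 1 := hρ.pow_ne_one_of_pos_of_lt (by norm_num) (by norm_num)
  have hsq : ρ ≠ ρ ^ 2 := fun h => by
    simpa using hρ.pow_inj (i := 1) (j := 2) (by norm_num) (by norm_num) (by simpa using h)
  have hn : ρ ≠ -1 := fun h => h2 (by linear_combination (ρ ^ 2 - ρ + 1) * h - hρ.pow_eq_one)
  have hn' : ρ ^ 2 ≠ -1 := fun h => h1 (by linear_combination (ρ ^ 2 - 1) * h - ρ * hρ.pow_eq_one)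
  have h11 : (1 : K) ≠ -1 := fun h => h2 (by linear_combination h)
  rw [setOf_isLGSolution_eq hρ]
  simp [Set.ncard_insert_of_notMem, h1, h1', hsq, hn, hn', h11, h1.symm, h1'.symm, h11.symm]

end LandauGinzburg

/-- The Landau-Ginzburg system of `Bl₃(ℙ²)` has exactly six solutions in `(ℂ*)²`
(matching `χ(Bl₃(ℙ²)) = 6`), and all of them are simple: the Jacobian determinant
of the system `F₁ = z₁ + z₁z₂ − 1/z₁ − 1/(z₁z₂)`, `F₂ = z₂ + z₁z₂ − 1/(z₁z₂) − 1/z₂`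
is nonzero at each solution. -/
theorem LG_Bl3P2_reduced :
    let ρ : ℂ := Complex.exp (2 * Real.pi * I / 3)
    let sols : Set (ℂ × ℂ) := {(1, 1), (ρ, ρ), (ρ ^ 2, ρ ^ 2), (1, -1), (-1, 1), (-1, -1)}
    -- partial derivatives of F₁ and F₂
    let J : ℂ × ℂ → ℂ := fun p =>
      (1 + p.2 + 1 / p.1 ^ 2 + 1 / (p.1 ^ 2 * p.2)) *
        (1 + p.1 + 1 / (p.1 * p.2 ^ 2) + 1 / p.2 ^ 2) -
      (p.1 + 1 / (p.1 * p.2 ^ 2)) * (p.2 + 1 / (p.1 ^ 2 * p.2))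
    ({p : ℂ × ℂ | p.1 ≠ 0 ∧ p.2 ≠ 0 ∧
        p.1 + p.1 * p.2 - 1 / p.1 - 1 / (p.1 * p.2) = 0 ∧
        p.2 + p.1 * p.2 - 1 / (p.1 * p.2) - 1 / p.2 = 0} = sols) ∧
      Set.ncard sols = 6 ∧ ∀ p ∈ sols, J p ≠ 0 := by
  intro ρ sols J
  have hρ : IsPrimitiveRoot ρ 3 := by
    simpa using Complex.isPrimitiveRoot_exp 3 (by norm_num)
  have hsols : {p : ℂ × ℂ | IsLGSolution p} = sols := setOf_isLGSolution_eq hρ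
  refine ⟨hsols, hsols ▸ ncard_setOf_isLGSolution hρ two_ne_zero, fun p hp => ?_⟩
  rw [← hsols] at hp
  exact lgJacobian_ne_zero_of_isLGSolution two_ne_zero three_ne_zero hp
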